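/- Let n be a natural number, a b : Fin n → ℝ both monotone increasing. Then for every permutation σ of Fin n, ∑ i, |a(i) - b(i)| ≤ ∑ i, |a(σ(i)) - b(i)|. -/

import Mathlib

/-!
A cost `c` has the Monge property when uncrossing two matched pairs never increases the total
cost; `|x - y|` is such a cost. Given a non-identity matching `σ`, let `x` be the largest index it
moves. Both `σ x` and `σ⁻¹ x` lie below `x`, so exchanging the partners of `x` and `σ⁻¹ x` is an
uncrossing that fixes `x`; it strictly shrinks the support of `σ`, and induction on the support
ends at the identity matching.
-/

open Finset Equiv Equiv.Perm

def IsMonge {α β M : Type*} [Preorder α] [Preorder β] [Add M] [LE M] (c : α → β → M) : Prop :=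
  ∀ ⦃x x' : α⦄, x ≤ x' → ∀ ⦃y y' : β⦄, y ≤ y' → c x y + c x' y' ≤ c x y' + c x' y

theorem isMonge_abs_sub {K : Type*} [Field K] [LinearOrder K] [IsStrictOrderedRing K] :
    IsMonge (fun x y : K ↦ |x - y|) := by
  intro x x' hx y y' hy
  rcases abs_cases (x - y) with ⟨e1, _⟩ | ⟨e1, _⟩ <;>
  rcases abs_cases (x' - y') with ⟨e2, _⟩ | ⟨e2, _⟩ <;>
  rcases abs_cases (x - y') with ⟨e3, _⟩ | ⟨e3, _⟩ <;>
  rcases abs_cases (x' - y) with ⟨e4, _⟩ | ⟨e4, _⟩ <;>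
  simp only [e1, e2, e3, e4] <;> linarith

namespace IsMonge

variable {ι α β M : Type*} [Preorder α] [Preorder β]
  [AddCommMonoid M] [PartialOrder M] [IsOrderedAddMonoid M] {c : α → β → M}

theorem sum_comp_swap_le [Fintype ι] [DecidableEq ι] (hc : IsMonge c) {f : ι → α}
    {g : ι → β} {p q : ι} (hf : f q ≤ f p) (hg : g p ≤ g q) :
    ∑ i, c (f (swap p q i)) (g i) ≤ ∑ i, c (f i) (g i) := by
  obtain rfl | hpq := eq_or_ne p q
  · simp
  rw [← sum_add_sum_compl {p, q}, ← sum_add_sum_compl {p, q} (fun i ↦ c (f i) (g i)),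
    sum_pair hpq, sum_pair hpq, swap_apply_left, swap_apply_right]
  refine add_le_add ?_ (sum_congr rfl fun i hi ↦ ?_).le
  · rw [add_comm (c (f p) (g p))]
    exact hc hf hg
  · simp only [mem_compl, mem_insert, mem_singleton, not_or] at hi
    rw [swap_apply_of_ne_of_ne hi.1 hi.2]

theorem sum_le_sum_comp_perm [LinearOrder ι] [Fintype ι] (hc : IsMonge c) {a : ι → α}
    {b : ι → β} (ha : Monotone a) (hb : Monotone b) (σ : Perm ι) :
    ∑ i, c (a i) (b i) ≤ ∑ i, c (a (σ i)) (b i) := by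
  obtain rfl | hσ1 := eq_or_ne σ 1
  · simp
  have hne : σ.support.Nonempty := nonempty_iff_ne_empty.2 (support_eq_empty_iff.not.2 hσ1)
  set x := σ.support.max' hne
  have hx : x ∈ σ.support := max'_mem _ _
  have hσx : σ x ≤ x := le_max' _ _ (apply_mem_support.2 hx)
  have hσinvx : σ⁻¹ x ≤ x := le_max' _ _ (by rwa [← support_inv, apply_mem_support, support_inv])
  have hτ : σ * swap (σ⁻¹ x) x = swap x (σ x) * σ := by
    rw [mul_swap_eq_swap_mul, coe_inv, apply_symm_apply]
  calc ∑ i, c (a i) (b i) ≤ ∑ i, c (a ((swap x (σ x) * σ) i)) (b i) :=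
        hc.sum_le_sum_comp_perm ha hb _
    _ = ∑ i, c ((a ∘ σ) (swap (σ⁻¹ x) x i)) (b i) := by rw [← hτ]; rfl
    _ ≤ ∑ i, c (a (σ i)) (b i) :=
        hc.sum_comp_swap_le (by simpa using ha hσx) (by simpa using hb hσinvx)
termination_by #σ.support
decreasing_by exact card_support_swap_mul (mem_support.1 hx)

end IsMonge

theorem sorted_matching_mae {n : ℕ} (a b : Fin n → ℝ)
    (ha : Monotone a) (hb : Monotone b) (σ : Equiv.Perm (Fin n)) :
    ∑ i, |a i - b i| ≤ ∑ i, |a (σ i) - b i| :=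
  isMonge_abs_sub.sum_le_sum_comp_perm ha hb σ
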